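/- arXiv:1704.04404 — 2 statements merged into one kernel-verified Lean document; each statement's English description precedes it below -/
import Mathlib

section
/- Let z₁, z₂, z₃ ∈ ℝ² be affinely independent, T := convexHull{z₁, z₂, z₃}, and for j ∈ {1,2,3} let φ_j be the barycentric coordinate of T at z_j. With indices taken cyclically mod 3, let e_j := z_{j+2} − z_{j+1} be the edge vector of the edge S_j of T opposite to z_j, and ν_j the outward unit normal of S_j. Let ε > 0 and let g : ℝ² → ℝ be affine with (constant) gradient ∇g. Set ḡ := (g(z₁) + g(z₂) + g(z₃))/3, b_j := (1/(3ε²))·⟨∇g, e_j⟩, and define τ : ℝ² → ℝ² by τ(x) := b₁·φ₂(x)·φ₃(x)·e₁ + b₂·φ₃(x)·φ₁(x)·e₂ + b₃·φ₁(x)·φ₂(x)·e₃. Then: (i) for each j and every point x of the edge S_j, ⟨τ(x), ν_j⟩ = 0; (ii) for every x ∈ ℝ², ε²·div τ(x) + g(x) − ḡ = 0; (iii) for every x ∈ T, ‖τ(x)‖ ≤ (1/9)·ε⁻²·H_T·osc(g; T), where H_T is the maximal edge length of T and osc(g; T) := sup_T g − inf_T g. -/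
open MeasureTheory
open scoped RealInnerProductSpace

noncomputable section

abbrev E2 : Type := EuclideanSpace ℝ (Fin 2)

/-- The divergence of a vector field on `ℝ²`: the trace of its Fréchet derivative. -/
def div2 (τ : E2 → E2) (x : E2) : ℝ :=
  ∑ i : Fin 2, ⟪fderiv ℝ τ x (EuclideanSpace.single i 1), EuclideanSpace.single i 1⟫

/-!
Write `λⱼ = φⱼ(x)`. Every affine function agrees with its barycentric interpolant, so
`λ₁ + λ₂ + λ₃ = 1`, `g = ∑ g(zⱼ) λⱼ` and `⟪∇g, eⱼ⟫ = g(z_{j+2}) - g(z_{j+1})`. On `Sⱼ` we have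
`λⱼ = 0`, which kills every term of `τ` except the `j`-th, a multiple of `eⱼ`. Since `φ_{j+1}`
and `φ_{j+2}` change by `-1` and `+1` along `eⱼ`, the divergence of the `j`-th term is
`bⱼ (λ_{j+1} - λ_{j+2})`; regrouping the sum by `λⱼ` gives `ε² div τ = ḡ - g`. On `T` the `λⱼ`
are nonnegative, so `λ₂λ₃ + λ₃λ₁ + λ₁λ₂ ≤ (λ₁ + λ₂ + λ₃)² / 3 = 1/3`, while
`|bⱼ| ≤ osc(g; T) / (3ε²)` and `‖eⱼ‖ ≤ H_T`.
-/

theorem affineSpan_eq_top_of_affineIndependent_three {k V : Type*} [DivisionRing k]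
    [AddCommGroup V] [Module k V] [FiniteDimensional k V] (hV : Module.finrank k V = 2)
    {z₁ z₂ z₃ : V} (hind : AffineIndependent k ![z₁, z₂, z₃]) :
    affineSpan k {z₁, z₂, z₃} = ⊤ := by
  rw [← Matrix.range_cons_cons_empty, ← Set.singleton_union, ← Matrix.range_cons,
    hind.affineSpan_eq_top_iff_card_eq_finrank_add_one, hV, Fintype.card_fin]

theorem AffineMap.linear_sub {k V W : Type*} [Ring k] [AddCommGroup V] [Module k V]
    [AddCommGroup W] [Module k W] (f : V →ᵃ[k] W) (u v : V) :
    f.linear (u - v) = f u - f v := by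
  rw [← vsub_eq_sub, f.linearMap_vsub, vsub_eq_sub]

theorem AffineMap.hasFDerivAt_of_finiteDimensional {E F : Type*} [NormedAddCommGroup E]
    [NormedSpace ℝ E] [FiniteDimensional ℝ E] [NormedAddCommGroup F] [NormedSpace ℝ F]
    (φ : E →ᵃ[ℝ] F) (x : E) : HasFDerivAt φ (LinearMap.toContinuousLinearMap φ.linear) x :=
  ContinuousAffineMap.hasFDerivAt ⟨φ, φ.continuous_of_finiteDimensional⟩

theorem abs_sub_le_sSup_image_sub_sInf_image {α : Type*} {f : α → ℝ} {s : Set α}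
    (hs : IsCompact (f '' s)) {u v : α} (hu : u ∈ s) (hv : v ∈ s) :
    |f u - f v| ≤ sSup (f '' s) - sInf (f '' s) := by
  have hle : ∀ {a b}, a ∈ s → b ∈ s → f a - f b ≤ sSup (f '' s) - sInf (f '' s) :=
    fun ha hb => sub_le_sub (le_csSup hs.bddAbove ⟨_, ha, rfl⟩)
      (csInf_le hs.bddBelow ⟨_, hb, rfl⟩)
  exact abs_sub_le_iff.mpr ⟨hle hu hv, hle hv hu⟩

section AffineFunctions

variable {V : Type*} [AddCommGroup V] [Module ℝ V] {z₁ z₂ z₃ : V} {φ₁ φ₂ φ₃ : V →ᵃ[ℝ] ℝ}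

theorem AffineMap.apply_eq_of_mem_segment (φ : V →ᵃ[ℝ] ℝ) {a b x : V} {c : ℝ}
    (ha : φ a = c) (hb : φ b = c) (hx : x ∈ segment ℝ a b) : φ x = c := by
  obtain ⟨s, t, -, -, hst, rfl⟩ := hx
  rw [Convex.combo_affine_apply hst, ha, hb, smul_eq_mul, smul_eq_mul, ← add_mul, hst, one_mul]

theorem AffineMap.nonneg_of_mem_convexHull (φ : V →ᵃ[ℝ] ℝ) {s : Set V}
    (hs : ∀ z ∈ s, 0 ≤ φ z) {x : V} (hx : x ∈ convexHull ℝ s) : 0 ≤ φ x :=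
  convexHull_min hs ((convex_Ici 0).affine_preimage φ) hx

theorem AffineMap.apply_eq_barycentric (hspan : affineSpan ℝ {z₁, z₂, z₃} = ⊤)
    (hφ₁ : φ₁ z₁ = 1 ∧ φ₁ z₂ = 0 ∧ φ₁ z₃ = 0) (hφ₂ : φ₂ z₂ = 1 ∧ φ₂ z₃ = 0 ∧ φ₂ z₁ = 0)
    (hφ₃ : φ₃ z₃ = 1 ∧ φ₃ z₁ = 0 ∧ φ₃ z₂ = 0) (f : V →ᵃ[ℝ] ℝ) (x : V) :
    f x = f z₁ * φ₁ x + f z₂ * φ₂ x + f z₃ * φ₃ x := by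
  obtain ⟨h₁₁, h₁₂, h₁₃⟩ := hφ₁
  obtain ⟨h₂₂, h₂₃, h₂₁⟩ := hφ₂
  obtain ⟨h₃₃, h₃₁, h₃₂⟩ := hφ₃
  have : f = f z₁ • φ₁ + f z₂ • φ₂ + f z₃ • φ₃ := by
    refine AffineMap.ext_on hspan ?_
    rintro z (rfl | rfl | rfl) <;> simp [*]
  conv_lhs => rw [this]
  simp

theorem barycentric_sum_eq_one (hspan : affineSpan ℝ {z₁, z₂, z₃} = ⊤)
    (hφ₁ : φ₁ z₁ = 1 ∧ φ₁ z₂ = 0 ∧ φ₁ z₃ = 0) (hφ₂ : φ₂ z₂ = 1 ∧ φ₂ z₃ = 0 ∧ φ₂ z₁ = 0)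
    (hφ₃ : φ₃ z₃ = 1 ∧ φ₃ z₁ = 0 ∧ φ₃ z₂ = 0) (x : V) : φ₁ x + φ₂ x + φ₃ x = 1 := by
  simpa using (AffineMap.apply_eq_barycentric hspan hφ₁ hφ₂ hφ₃ (.const ℝ V (1 : ℝ)) x).symm

theorem barycentric_nonneg_of_mem_convexHull
    (hφ₁ : φ₁ z₁ = 1 ∧ φ₁ z₂ = 0 ∧ φ₁ z₃ = 0) (hφ₂ : φ₂ z₂ = 1 ∧ φ₂ z₃ = 0 ∧ φ₂ z₁ = 0)
    (hφ₃ : φ₃ z₃ = 1 ∧ φ₃ z₁ = 0 ∧ φ₃ z₂ = 0) {x : V} (hx : x ∈ convexHull ℝ {z₁, z₂, z₃}) :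
    0 ≤ φ₁ x ∧ 0 ≤ φ₂ x ∧ 0 ≤ φ₃ x := by
  obtain ⟨h₁₁, h₁₂, h₁₃⟩ := hφ₁
  obtain ⟨h₂₂, h₂₃, h₂₁⟩ := hφ₂
  obtain ⟨h₃₃, h₃₁, h₃₂⟩ := hφ₃
  exact ⟨φ₁.nonneg_of_mem_convexHull (by simp [h₁₁, h₁₂, h₁₃]) hx,
    φ₂.nonneg_of_mem_convexHull (by simp [h₂₁, h₂₂, h₂₃]) hx,
    φ₃.nonneg_of_mem_convexHull (by simp [h₃₁, h₃₂, h₃₃]) hx⟩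

end AffineFunctions

theorem EuclideanSpace.sum_inner_smulRight_single {ι : Type*} [Fintype ι] [DecidableEq ι]
    (C : EuclideanSpace ℝ ι →L[ℝ] ℝ) (e : EuclideanSpace ℝ ι) :
    ∑ i, ⟪C.smulRight e (EuclideanSpace.single i 1), EuclideanSpace.single i 1⟫ = C e := by
  conv_rhs => rw [← (EuclideanSpace.basisFun ι ℝ).sum_repr e]
  simp [EuclideanSpace.inner_single_right, mul_comm]

theorem div2_fun_add {τ σ : E2 → E2} {x : E2} (hτ : DifferentiableAt ℝ τ x)
    (hσ : DifferentiableAt ℝ σ x) : div2 (fun y => τ y + σ y) x = div2 τ x + div2 σ x := by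
  simp only [div2, fderiv_fun_add hτ hσ, add_apply, inner_add_left, Finset.sum_add_distrib]

theorem div2_smul_const {f : E2 → ℝ} {x : E2} (hf : DifferentiableAt ℝ f x) (e : E2) :
    div2 (fun y => f y • e) x = fderiv ℝ f x e := by
  rw [div2, fderiv_smul_const hf, EuclideanSpace.sum_inner_smulRight_single]

theorem div2_smul_mul_affine (c : ℝ) (a b : E2 →ᵃ[ℝ] ℝ) (e x : E2) :
    div2 (fun y => (c * (a y * b y)) • e) x = c * (a.linear e * b x + a x * b.linear e) := by
  have hd := ((a.hasFDerivAt_of_finiteDimensional x).fun_mul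
    (b.hasFDerivAt_of_finiteDimensional x)).const_mul c
  rw [div2_smul_const hd.differentiableAt, hd.fderiv]
  simp only [smul_apply, add_apply, LinearMap.coe_toContinuousLinearMap', smul_eq_mul]
  ring

/-- The flux of (4.7) at a point with barycentric coordinates `p₁, p₂, p₃`. -/
def cyclicFlux {V : Type*} [AddCommGroup V] [Module ℝ V] (b₁ b₂ b₃ p₁ p₂ p₃ : ℝ)
    (e₁ e₂ e₃ : V) : V :=
  (b₁ * (p₂ * p₃)) • e₁ + (b₂ * (p₃ * p₁)) • e₂ + (b₃ * (p₁ * p₂)) • e₃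

theorem cyclicFlux_rotate {V : Type*} [AddCommGroup V] [Module ℝ V] (b₁ b₂ b₃ p₁ p₂ p₃ : ℝ)
    (e₁ e₂ e₃ : V) :
    cyclicFlux b₁ b₂ b₃ p₁ p₂ p₃ e₁ e₂ e₃ = cyclicFlux b₂ b₃ b₁ p₂ p₃ p₁ e₂ e₃ e₁ := by
  unfold cyclicFlux; abel

theorem inner_cyclicFlux_eq_zero {V : Type*} [NormedAddCommGroup V] [InnerProductSpace ℝ V]
    {b₁ b₂ b₃ p₁ p₂ p₃ : ℝ} {e₁ e₂ e₃ ν : V} (hp₁ : p₁ = 0) (hν : ⟪ν, e₁⟫ = 0) :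
    ⟪cyclicFlux b₁ b₂ b₃ p₁ p₂ p₃ e₁ e₂ e₃, ν⟫ = 0 := by
  rw [cyclicFlux, real_inner_comm]
  simp [hp₁, real_inner_smul_right, hν]

theorem norm_cyclicFlux_le {V : Type*} [NormedAddCommGroup V] [NormedSpace ℝ V]
    {b₁ b₂ b₃ p₁ p₂ p₃ K H : ℝ} {e₁ e₂ e₃ : V}
    (hp₁ : 0 ≤ p₁) (hp₂ : 0 ≤ p₂) (hp₃ : 0 ≤ p₃) (hp : p₁ + p₂ + p₃ = 1)
    (hb₁ : |b₁| ≤ K) (hb₂ : |b₂| ≤ K) (hb₃ : |b₃| ≤ K)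
    (he₁ : ‖e₁‖ ≤ H) (he₂ : ‖e₂‖ ≤ H) (he₃ : ‖e₃‖ ≤ H) :
    ‖cyclicFlux b₁ b₂ b₃ p₁ p₂ p₃ e₁ e₂ e₃‖ ≤ K * H / 3 := by
  have hK : 0 ≤ K := (abs_nonneg _).trans hb₁
  have hH : 0 ≤ H := (norm_nonneg _).trans he₁
  have term : ∀ {b p q : ℝ} {e : V}, |b| ≤ K → 0 ≤ p → 0 ≤ q → ‖e‖ ≤ H →
      ‖(b * (p * q)) • e‖ ≤ K * H * (p * q) := fun hb hp hq he => by
    rw [norm_smul, Real.norm_eq_abs, abs_mul, abs_of_nonneg (mul_nonneg hp hq)]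
    nlinarith [mul_le_mul_of_nonneg_right (mul_le_mul hb he (norm_nonneg _) hK)
      (mul_nonneg hp hq)]
  have am_gm : p₂ * p₃ + p₃ * p₁ + p₁ * p₂ ≤ 1 / 3 := by
    nlinarith [sq_nonneg (p₁ - p₂), sq_nonneg (p₂ - p₃), sq_nonneg (p₃ - p₁)]
  calc ‖cyclicFlux b₁ b₂ b₃ p₁ p₂ p₃ e₁ e₂ e₃‖
      ≤ K * H * (p₂ * p₃) + K * H * (p₃ * p₁) + K * H * (p₁ * p₂) :=
        (norm_add₃_le ..).trans (add_le_add_three (term hb₁ hp₂ hp₃ he₁)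
          (term hb₂ hp₃ hp₁ he₂) (term hb₃ hp₁ hp₂ he₃))
    _ ≤ K * H / 3 := by nlinarith [mul_nonneg hK hH]

theorem norm_cyclicFlux_barycentric_le {V : Type*} [NormedAddCommGroup V] [NormedSpace ℝ V]
    [FiniteDimensional ℝ V] {z₁ z₂ z₃ : V} (hspan : affineSpan ℝ {z₁, z₂, z₃} = ⊤)
    {φ₁ φ₂ φ₃ : V →ᵃ[ℝ] ℝ}
    (hφ₁ : φ₁ z₁ = 1 ∧ φ₁ z₂ = 0 ∧ φ₁ z₃ = 0) (hφ₂ : φ₂ z₂ = 1 ∧ φ₂ z₃ = 0 ∧ φ₂ z₁ = 0)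
    (hφ₃ : φ₃ z₃ = 1 ∧ φ₃ z₁ = 0 ∧ φ₃ z₂ = 0) (g : V →ᵃ[ℝ] ℝ) {c : ℝ} (hc : 0 ≤ c) {x : V}
    (hx : x ∈ convexHull ℝ {z₁, z₂, z₃}) :
    ‖cyclicFlux (c * (g z₃ - g z₂)) (c * (g z₁ - g z₃)) (c * (g z₂ - g z₁)) (φ₁ x) (φ₂ x) (φ₃ x)
        (z₃ - z₂) (z₁ - z₃) (z₂ - z₁)‖ ≤
      c * (sSup (g '' convexHull ℝ {z₁, z₂, z₃}) - sInf (g '' convexHull ℝ {z₁, z₂, z₃}))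
        * max ‖z₃ - z₂‖ (max ‖z₁ - z₃‖ ‖z₂ - z₁‖) / 3 := by
  have himg : IsCompact (g '' convexHull ℝ {z₁, z₂, z₃}) :=
    ((Set.toFinite _).isCompact_convexHull ℝ).image g.continuous_of_finiteDimensional
  have hb : ∀ {u v}, u ∈ ({z₁, z₂, z₃} : Set V) → v ∈ ({z₁, z₂, z₃} : Set V) →
      |c * (g u - g v)| ≤
        c * (sSup (g '' convexHull ℝ {z₁, z₂, z₃}) - sInf (g '' convexHull ℝ {z₁, z₂, z₃})) :=
    fun hu hv => by
      rw [abs_mul, abs_of_nonneg hc]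
      exact mul_le_mul_of_nonneg_left (abs_sub_le_sSup_image_sub_sInf_image himg
        (subset_convexHull ℝ _ hu) (subset_convexHull ℝ _ hv)) hc
  obtain ⟨hx₁, hx₂, hx₃⟩ := barycentric_nonneg_of_mem_convexHull hφ₁ hφ₂ hφ₃ hx
  refine norm_cyclicFlux_le hx₁ hx₂ hx₃ (barycentric_sum_eq_one hspan hφ₁ hφ₂ hφ₃ x)
    (hb (by simp) (by simp)) (hb (by simp) (by simp)) (hb (by simp) (by simp)) ?_ ?_ ?_ <;> simp

theorem div2_cyclicFlux (b₁ b₂ b₃ : ℝ) (φ₁ φ₂ φ₃ : E2 →ᵃ[ℝ] ℝ) (e₁ e₂ e₃ x : E2) :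
    div2 (fun y => cyclicFlux b₁ b₂ b₃ (φ₁ y) (φ₂ y) (φ₃ y) e₁ e₂ e₃) x =
      b₁ * (φ₂.linear e₁ * φ₃ x + φ₂ x * φ₃.linear e₁)
        + b₂ * (φ₃.linear e₂ * φ₁ x + φ₃ x * φ₁.linear e₂)
        + b₃ * (φ₁.linear e₃ * φ₂ x + φ₁ x * φ₂.linear e₃) := by
  have hφ₁ := fun y => (φ₁.hasFDerivAt_of_finiteDimensional y).differentiableAt
  have hφ₂ := fun y => (φ₂.hasFDerivAt_of_finiteDimensional y).differentiableAt
  have hφ₃ := fun y => (φ₃.hasFDerivAt_of_finiteDimensional y).differentiableAt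
  unfold cyclicFlux
  rw [div2_fun_add (by fun_prop) (by fun_prop), div2_fun_add (by fun_prop) (by fun_prop),
    div2_smul_mul_affine, div2_smul_mul_affine, div2_smul_mul_affine]

theorem div2_cyclicFlux_barycentric {z₁ z₂ z₃ : E2} {φ₁ φ₂ φ₃ : E2 →ᵃ[ℝ] ℝ}
    (hφ₁ : φ₁ z₁ = 1 ∧ φ₁ z₂ = 0 ∧ φ₁ z₃ = 0) (hφ₂ : φ₂ z₂ = 1 ∧ φ₂ z₃ = 0 ∧ φ₂ z₁ = 0)
    (hφ₃ : φ₃ z₃ = 1 ∧ φ₃ z₁ = 0 ∧ φ₃ z₂ = 0) (b₁ b₂ b₃ : ℝ) (x : E2) :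
    div2 (fun y => cyclicFlux b₁ b₂ b₃ (φ₁ y) (φ₂ y) (φ₃ y) (z₃ - z₂) (z₁ - z₃) (z₂ - z₁)) x =
      b₁ * (φ₂ x - φ₃ x) + b₂ * (φ₃ x - φ₁ x) + b₃ * (φ₁ x - φ₂ x) := by
  obtain ⟨h₁₁, h₁₂, h₁₃⟩ := hφ₁
  obtain ⟨h₂₂, h₂₃, h₂₁⟩ := hφ₂
  obtain ⟨h₃₃, h₃₁, h₃₂⟩ := hφ₃
  rw [div2_cyclicFlux]
  simp only [AffineMap.linear_sub, h₁₁, h₁₂, h₁₃, h₂₁, h₂₂, h₂₃, h₃₁, h₃₂, h₃₃]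
  ring

theorem stmt5_general
    (z₁ z₂ z₃ : E2) (hind : AffineIndependent ℝ ![z₁, z₂, z₃])
    (T : Set E2) (hT : T = convexHull ℝ {z₁, z₂, z₃})
    (φ₁ φ₂ φ₃ : E2 →ᵃ[ℝ] ℝ)
    (hφ₁ : φ₁ z₁ = 1 ∧ φ₁ z₂ = 0 ∧ φ₁ z₃ = 0)
    (hφ₂ : φ₂ z₂ = 1 ∧ φ₂ z₃ = 0 ∧ φ₂ z₁ = 0)
    (hφ₃ : φ₃ z₃ = 1 ∧ φ₃ z₁ = 0 ∧ φ₃ z₂ = 0)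
    (e₁ e₂ e₃ : E2) (he₁ : e₁ = z₃ - z₂) (he₂ : e₂ = z₁ - z₃) (he₃ : e₃ = z₂ - z₁)
    (ν₁ ν₂ ν₃ : E2)
    (hν₁o : ⟪ν₁, e₁⟫ = 0)
    (hν₂o : ⟪ν₂, e₂⟫ = 0)
    (hν₃o : ⟪ν₃, e₃⟫ = 0)
    (ε : ℝ) (hε : 0 < ε)
    (g : E2 →ᵃ[ℝ] ℝ) (G : E2) (hG : ∀ y : E2, g.linear y = ⟪G, y⟫)
    (gbar : ℝ) (hgbar : gbar = (g z₁ + g z₂ + g z₃) / 3)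
    (b₁ b₂ b₃ : ℝ)
    (hb₁ : b₁ = 1 / (3 * ε ^ 2) * ⟪G, e₁⟫)
    (hb₂ : b₂ = 1 / (3 * ε ^ 2) * ⟪G, e₂⟫)
    (hb₃ : b₃ = 1 / (3 * ε ^ 2) * ⟪G, e₃⟫)
    (τ : E2 → E2)
    (hτ : τ = fun x => (b₁ * (φ₂ x * φ₃ x)) • e₁ + (b₂ * (φ₃ x * φ₁ x)) • e₂
        + (b₃ * (φ₁ x * φ₂ x)) • e₃)
    (HT : ℝ) (hHT : HT = max ‖e₁‖ (max ‖e₂‖ ‖e₃‖)) :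
    (∀ x ∈ segment ℝ z₂ z₃, ⟪τ x, ν₁⟫ = 0)
    ∧ (∀ x ∈ segment ℝ z₃ z₁, ⟪τ x, ν₂⟫ = 0)
    ∧ (∀ x ∈ segment ℝ z₁ z₂, ⟪τ x, ν₃⟫ = 0)
    ∧ (∀ x : E2, ε ^ 2 * div2 τ x + g x - gbar = 0)
    ∧ (∀ x ∈ T, ‖τ x‖ ≤ 1 / 9 * (ε ^ 2)⁻¹ * HT
        * (sSup ((fun y => g y) '' T) - sInf ((fun y => g y) '' T))) := by
  have hspan := affineSpan_eq_top_of_affineIndependent_three finrank_euclideanSpace_fin hind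
  subst he₁ he₂ he₃ hT hHT hgbar
  simp only [← hG, AffineMap.linear_sub] at hb₁ hb₂ hb₃
  have hτx : ∀ x,
      τ x = cyclicFlux b₁ b₂ b₃ (φ₁ x) (φ₂ x) (φ₃ x) (z₃ - z₂) (z₁ - z₃) (z₂ - z₁) := by
    simp [hτ, cyclicFlux]
  refine ⟨fun x hx => ?_, fun x hx => ?_, fun x hx => ?_, fun x => ?_, fun x hx => ?_⟩
  · rw [hτx]
    exact inner_cyclicFlux_eq_zero (φ₁.apply_eq_of_mem_segment hφ₁.2.1 hφ₁.2.2 hx) hν₁o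
  · rw [hτx, cyclicFlux_rotate]
    exact inner_cyclicFlux_eq_zero (φ₂.apply_eq_of_mem_segment hφ₂.2.1 hφ₂.2.2 hx) hν₂o
  · rw [hτx, ← cyclicFlux_rotate]
    exact inner_cyclicFlux_eq_zero (φ₃.apply_eq_of_mem_segment hφ₃.2.1 hφ₃.2.2 hx) hν₃o
  · rw [funext hτx, div2_cyclicFlux_barycentric hφ₁ hφ₂ hφ₃,
      AffineMap.apply_eq_barycentric hspan hφ₁ hφ₂ hφ₃ g x, hb₁, hb₂, hb₃]
    field_simp
    linear_combination (g z₁ + g z₂ + g z₃) * barycentric_sum_eq_one hspan hφ₁ hφ₂ hφ₃ x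
  · rw [hτx, hb₁, hb₂, hb₃]
    exact (norm_cyclicFlux_barycentric_le hspan hφ₁ hφ₂ hφ₃ g (by positivity) hx).trans_eq
      (by ring)

/-- The explicit flux `τ_T^f` of (4.7) satisfies (4.6): zero normal trace on `∂T`,
`ε² div τ + (g - ḡ) = 0`, and the pointwise bound `‖τ‖ ≤ (1/9) ε⁻² H_T osc(g;T)`. -/
theorem stmt5
    (z₁ z₂ z₃ : E2) (hind : AffineIndependent ℝ ![z₁, z₂, z₃])
    (T : Set E2) (hT : T = convexHull ℝ {z₁, z₂, z₃})
    (φ₁ φ₂ φ₃ : E2 →ᵃ[ℝ] ℝ)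
    (hφ₁ : φ₁ z₁ = 1 ∧ φ₁ z₂ = 0 ∧ φ₁ z₃ = 0)
    (hφ₂ : φ₂ z₂ = 1 ∧ φ₂ z₃ = 0 ∧ φ₂ z₁ = 0)
    (hφ₃ : φ₃ z₃ = 1 ∧ φ₃ z₁ = 0 ∧ φ₃ z₂ = 0)
    (e₁ e₂ e₃ : E2) (he₁ : e₁ = z₃ - z₂) (he₂ : e₂ = z₁ - z₃) (he₃ : e₃ = z₂ - z₁)
    (ν₁ ν₂ ν₃ : E2)
    (hν₁u : ‖ν₁‖ = 1) (hν₁o : ⟪ν₁, e₁⟫ = 0) (hν₁s : ⟪ν₁, z₁ - z₂⟫ < 0)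
    (hν₂u : ‖ν₂‖ = 1) (hν₂o : ⟪ν₂, e₂⟫ = 0) (hν₂s : ⟪ν₂, z₂ - z₃⟫ < 0)
    (hν₃u : ‖ν₃‖ = 1) (hν₃o : ⟪ν₃, e₃⟫ = 0) (hν₃s : ⟪ν₃, z₃ - z₁⟫ < 0)
    (ε : ℝ) (hε : 0 < ε)
    (g : E2 →ᵃ[ℝ] ℝ) (G : E2) (hG : ∀ y : E2, g.linear y = ⟪G, y⟫)
    (gbar : ℝ) (hgbar : gbar = (g z₁ + g z₂ + g z₃) / 3)
    (b₁ b₂ b₃ : ℝ)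
    (hb₁ : b₁ = 1 / (3 * ε ^ 2) * ⟪G, e₁⟫)
    (hb₂ : b₂ = 1 / (3 * ε ^ 2) * ⟪G, e₂⟫)
    (hb₃ : b₃ = 1 / (3 * ε ^ 2) * ⟪G, e₃⟫)
    (τ : E2 → E2)
    (hτ : τ = fun x => (b₁ * (φ₂ x * φ₃ x)) • e₁ + (b₂ * (φ₃ x * φ₁ x)) • e₂
        + (b₃ * (φ₁ x * φ₂ x)) • e₃)
    (HT : ℝ) (hHT : HT = max ‖e₁‖ (max ‖e₂‖ ‖e₃‖)) :
    (∀ x ∈ segment ℝ z₂ z₃, ⟪τ x, ν₁⟫ = 0)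
    ∧ (∀ x ∈ segment ℝ z₃ z₁, ⟪τ x, ν₂⟫ = 0)
    ∧ (∀ x ∈ segment ℝ z₁ z₂, ⟪τ x, ν₃⟫ = 0)
    ∧ (∀ x : E2, ε ^ 2 * div2 τ x + g x - gbar = 0)
    ∧ (∀ x ∈ T, ‖τ x‖ ≤ 1 / 9 * (ε ^ 2)⁻¹ * HT
        * (sSup ((fun y => g y) '' T) - sInf ((fun y => g y) '' T))) :=
  stmt5_general z₁ z₂ z₃ hind T hT φ₁ φ₂ φ₃ hφ₁ hφ₂ hφ₃ e₁ e₂ e₃ he₁ he₂ he₃ ν₁ ν₂ ν₃ hν₁o hν₂o hν₃o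
    ε hε g G hG gbar hgbar b₁ b₂ b₃ hb₁ hb₂ hb₃ τ hτ HT hHT
end
end

section
/- Let N ≥ 2, let z ∈ ℝ², and for each i ∈ ZMod N let g_i : ℝ² → ℝ be an affine function and t_i ∈ ℝ² a unit vector such that g_i(z + s·t_i) = g_{i−1}(z + s·t_i) for all s ∈ ℝ (consecutive functions agree on the line through z with direction t_i). Let w_i ∈ ℝ² denote the (constant) gradient of g_i minus the gradient of g_{i−1}, and let e₁, e₂ be the standard orthonormal basis of ℝ². Then: (a) Σ_{i ∈ ZMod N} w_i = 0; (b) ⟨w_i, t_i⟩ = 0 for every i; (c) for any two distinct indices a, b with t_a ∈ {e₂, −e₂} and t_b ∈ {e₂, −e₂}, one has |⟨w_a + w_b, e₁⟩| ≤ Σ_{i ≠ a, b} |⟨t_i, e₂⟩|·‖w_i‖. -/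
open MeasureTheory
open scoped RealInnerProductSpace

noncomputable section

/-! The jumps `w i` telescope around the cycle, so they sum to zero, and each is orthogonal to its
edge because consecutive affine pieces agree on that edge. In the plane, orthogonality to a unit
vector `t` forces `|⟪w, e₁⟫| = |⟪t, e₂⟫| * ‖w‖`; since `w a + w b` is minus the sum of the other
jumps, the triangle inequality gives (c). -/

open Finset

theorem sum_eq_zero_of_inner_eq_sub_shift {ι E : Type*} [AddGroup ι] [Fintype ι]
    [NormedAddCommGroup E] [InnerProductSpace ℝ E] (f : ι → E → ℝ) (w : ι → E) (c : ι)
    (hw : ∀ i y, f i y - f (i - c) y = ⟪w i, y⟫) : ∑ i, w i = 0 := by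
  refine ext_inner_right ℝ fun y => ?_
  have hshift : ∑ i, f (i - c) y = ∑ i, f i y := (Equiv.subRight c).sum_comp (f · y)
  simp_rw [sum_inner, inner_zero_left, ← hw, sum_sub_distrib, hshift, sub_self]

theorem AffineMap.linear_eq_of_eq_of_eq_vadd {k V₁ P₁ V₂ : Type*} [Ring k] [AddCommGroup V₁]
    [Module k V₁] [AddTorsor V₁ P₁] [AddCommGroup V₂] [Module k V₂] (f g : P₁ →ᵃ[k] V₂)
    {p : P₁} {v : V₁} (h₀ : f p = g p) (h₁ : f (v +ᵥ p) = g (v +ᵥ p)) :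
    f.linear v = g.linear v := by
  rw [← vadd_vsub v p, f.linearMap_vsub, g.linearMap_vsub, h₀, h₁]

theorem EuclideanSpace.abs_apply_zero_mul_norm_eq_of_inner_eq_zero
    {w t : EuclideanSpace ℝ (Fin 2)} (h : ⟪w, t⟫ = 0) : |w 0| * ‖t‖ = |t 1| * ‖w‖ := by
  have hcoord : w 0 * t 0 + w 1 * t 1 = 0 := by
    simp only [PiLp.inner_apply, Fin.sum_univ_two, RCLike.inner_apply, conj_trivial] at h
    linarith
  refine (sq_eq_sq₀ (by positivity) (by positivity)).1 ?_
  simp only [mul_pow, sq_abs, EuclideanSpace.real_norm_sq_eq, Fin.sum_univ_two]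
  linear_combination (w 0 * t 0 - w 1 * t 1) * hcoord

theorem add_eq_neg_sum_sdiff_pair {ι M : Type*} [Fintype ι] [DecidableEq ι] [AddCommGroup M]
    {w : ι → M} (hw : ∑ i, w i = 0) {a b : ι} (hab : a ≠ b) :
    w a + w b = -∑ i ∈ univ \ {a, b}, w i := by
  rw [eq_neg_iff_add_eq_zero, ← sum_pair hab, add_comm, sum_sdiff (subset_univ _), hw]

theorem stmt11_general
    (N : ℕ) [NeZero N]
    (z : E2)
    (g : ZMod N → (E2 →ᵃ[ℝ] ℝ))
    (t : ZMod N → E2) (ht : ∀ i, ‖t i‖ = 1)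
    (hagree : ∀ (i : ZMod N) (s : ℝ), g i (z + s • t i) = g (i - 1) (z + s • t i))
    (w : ZMod N → E2)
    (hw : ∀ (i : ZMod N) (y : E2), (g i).linear y - (g (i - 1)).linear y = ⟪w i, y⟫) :
    (∑ i : ZMod N, w i) = 0
    ∧ (∀ i : ZMod N, ⟪w i, t i⟫ = 0)
    ∧ (∀ a b : ZMod N, a ≠ b →
        (t a = EuclideanSpace.single 1 1 ∨ t a = -EuclideanSpace.single 1 1) →
        (t b = EuclideanSpace.single 1 1 ∨ t b = -EuclideanSpace.single 1 1) →
        |⟪w a + w b, EuclideanSpace.single 0 1⟫|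
          ≤ ∑ i ∈ Finset.univ \ {a, b},
              |⟪t i, EuclideanSpace.single 1 1⟫| * ‖w i‖) := by
  have hsum : ∑ i, w i = 0 := sum_eq_zero_of_inner_eq_sub_shift (fun i => (g i).linear) w 1 hw
  have horth (i : ZMod N) : ⟪w i, t i⟫ = 0 := by
    have hlin := (g i).linear_eq_of_eq_of_eq_vadd (g (i - 1)) (p := z) (v := t i)
      (by simpa using hagree i 0) (by simpa [add_comm] using hagree i 1)
    rw [← hw, hlin, sub_self]
  refine ⟨hsum, horth, fun a b hab _ _ => ?_⟩
  rw [add_eq_neg_sum_sdiff_pair hsum hab, inner_neg_left, sum_inner, abs_neg]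
  refine (abs_sum_le_sum_abs _ _).trans (sum_le_sum fun i _ => le_of_eq ?_)
  simpa [EuclideanSpace.inner_single_right, ht i] using
    EuclideanSpace.abs_apply_zero_mul_norm_eq_of_inner_eq_zero (horth i)

/-- Abstract form of Lemma 9.3: for a cyclic family of affine functions around `z`
with consecutive functions agreeing along lines through `z`, the gradient jumps
`w_i` sum to zero, are orthogonal to the corresponding edge directions, and the
jumps across the two vertical edges nearly cancel. -/
theorem stmt11
    (N : ℕ) [NeZero N] (hN : 2 ≤ N)
    (z : E2)
    (g : ZMod N → (E2 →ᵃ[ℝ] ℝ))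
    (t : ZMod N → E2) (ht : ∀ i, ‖t i‖ = 1)
    (hagree : ∀ (i : ZMod N) (s : ℝ), g i (z + s • t i) = g (i - 1) (z + s • t i))
    (w : ZMod N → E2)
    (hw : ∀ (i : ZMod N) (y : E2), (g i).linear y - (g (i - 1)).linear y = ⟪w i, y⟫) :
    (∑ i : ZMod N, w i) = 0
    ∧ (∀ i : ZMod N, ⟪w i, t i⟫ = 0)
    ∧ (∀ a b : ZMod N, a ≠ b →
        (t a = EuclideanSpace.single 1 1 ∨ t a = -EuclideanSpace.single 1 1) →
        (t b = EuclideanSpace.single 1 1 ∨ t b = -EuclideanSpace.single 1 1) →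
        |⟪w a + w b, EuclideanSpace.single 0 1⟫|
          ≤ ∑ i ∈ Finset.univ \ {a, b},
              |⟪t i, EuclideanSpace.single 1 1⟫| * ‖w i‖) :=
  stmt11_general N z g t ht hagree w hw
end
end
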